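/- Let O ⊆ ℝ^d be an open set and let S ⊆ O be compact. Then the inward filling infill_O S coincides with the complement in O_∞ of the connected component of O_∞∖S containing the point ∞; moreover, O_∞∖infill_O S is connected and locally connected. -/

import Mathlib

open MeasureTheory Metric Set Filter
open scoped ENNReal Topology OnePoint

noncomputable section

/-- `d`-dimensional Euclidean space. -/
abbrev Euc (d : ℕ) : Type := EuclideanSpace ℝ (Fin d)

/-- A real-valued function is *harmonic on a set* if it is continuous there and satisfies
the mean value equality over every closed ball contained in the set. -/
def HarmOn {d : ℕ} (h : Euc d → ℝ) (O : Set (Euc d)) : Prop :=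
  ContinuousOn h O ∧
    ∀ x : Euc d, ∀ r : ℝ, 0 < r → closedBall x r ⊆ O →
      h x = ⨍ y in closedBall x r, h y ∂volume

/-- An `EReal`-valued function is *subharmonic on a set* if it is upper semicontinuous there,
nowhere `+∞` there, and on every closed ball contained in the set it is dominated by each
continuous function harmonic in the interior that dominates it on the boundary sphere. -/
def SbhOn {d : ℕ} (u : Euc d → EReal) (O : Set (Euc d)) : Prop :=
  UpperSemicontinuousOn u O ∧ (∀ x ∈ O, u x < ⊤) ∧
    ∀ x : Euc d, ∀ r : ℝ, 0 < r → closedBall x r ⊆ O →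
      ∀ h : Euc d → ℝ, ContinuousOn h (closedBall x r) → HarmOn h (ball x r) →
        (∀ y ∈ sphere x r, u y ≤ (h y : EReal)) →
        ∀ y ∈ closedBall x r, u y ≤ (h y : EReal)

/-- The positive part of an extended real number, as a member of `ℝ≥0∞`. -/
def erealPos (x : EReal) : ℝ≥0∞ := if x = ⊤ then ⊤ else ENNReal.ofReal x.toReal

/-- The integral of an `EReal`-valued function against a measure, with values in `EReal`:
the lower integral of the positive part minus the lower integral of the negative part. -/
def eInt {d : ℕ} (μ : Measure (Euc d)) (u : Euc d → EReal) : EReal :=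
  ((∫⁻ x, erealPos (u x) ∂μ : ℝ≥0∞) : EReal) -
    ((∫⁻ x, erealPos (-(u x)) ∂μ : ℝ≥0∞) : EReal)

/-- The (closed) support of a measure: points all of whose open neighbourhoods
have strictly positive measure. -/
def msupp {d : ℕ} (μ : Measure (Euc d)) : Set (Euc d) :=
  {x | ∀ U : Set (Euc d), IsOpen U → x ∈ U → 0 < μ U}

/-- A finite positive Borel measure whose support is a compact subset of `O`. -/
def MeasCompIn {d : ℕ} (μ : Measure (Euc d)) (O : Set (Euc d)) : Prop :=
  IsCompact (msupp μ) ∧ msupp μ ⊆ O ∧ μ (msupp μ)ᶜ = 0 ∧ μ Set.univ < ⊤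

/-- The *inward filling* of `S` with respect to `O`: the union of `S` with all connected
components of `O \ S` that are relatively compact in `O`. -/
def infill {X : Type*} [TopologicalSpace X] (O S : Set X) : Set X :=
  S ∪ {y | ∃ x ∈ O \ S, y ∈ connectedComponentIn (O \ S) x ∧
      IsCompact (closure (connectedComponentIn (O \ S) x)) ∧
      closure (connectedComponentIn (O \ S) x) ⊆ O}

/-- The copy of a subset `S ⊆ O` inside the one-point (Alexandroff) compactification
`O_∞ = OnePoint ↥O` of `O`. -/
def inOnePoint {X : Type*} (O S : Set X) : Set (OnePoint ↥O) :=
  OnePoint.some '' {x : ↥O | (x : X) ∈ S}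

/-!
Let `ι : O → O_∞` and let `K` be the component of `∞` in `O_∞ \ S`. If a component `C` of `O \ S`
is not relatively compact in `O`, then `∞ ∈ closure (ι C)`, so `ι C ⊆ K`. If `C` is relatively
compact, then `ι C` is clopen in `O_∞ \ S`, because components of open sets are open and
`closure C \ S ⊆ C`, so `ι C` misses `K`. Hence `ι (infill O S) = Kᶜ`.

In a normed space, a point outside a ball containing `S` lies on a ray avoiding `S`, so the
relatively compact components stay in that ball and `infill O L` is compact for compact `L`.
For compact `L ⊆ O` the connected open sets `O_∞ \ ι (infill O L)` then form a neighbourhood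
basis of `∞`. So `O_∞` is locally connected, and so is its open subset `K`.
-/

section Infill

variable {X : Type*} [TopologicalSpace X]

def IsRelCompactIn (O C : Set X) : Prop := IsCompact (closure C) ∧ closure C ⊆ O

theorem mem_infill_iff {O S : Set X} {y : X} :
    y ∈ infill O S ↔ y ∈ S ∨ y ∈ O ∧ IsRelCompactIn O (connectedComponentIn (O \ S) y) := by
  constructor
  · rintro (hyS | ⟨x, -, hyx, hx⟩)
    · exact .inl hyS
    · exact .inr ⟨(connectedComponentIn_subset _ _ hyx).1, by rwa [← connectedComponentIn_eq hyx]⟩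
  · rintro (hyS | ⟨hyO, hy⟩)
    · exact .inl hyS
    by_cases hyS : y ∈ S
    · exact .inl hyS
    · exact .inr ⟨y, ⟨hyO, hyS⟩, mem_connectedComponentIn ⟨hyO, hyS⟩, hy⟩

theorem infill_subset {O S : Set X} (hSO : S ⊆ O) : infill O S ⊆ O := fun _ hy =>
  (mem_infill_iff.1 hy).elim (hSO ·) And.left

section LocallyConnected

variable [LocallyConnectedSpace X]

theorem closure_connectedComponentIn_inter_subset {F : Set X} (hF : IsOpen F) (x : X) :
    closure (connectedComponentIn F x) ∩ F ⊆ connectedComponentIn F x := by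
  rintro z ⟨hz, hzF⟩
  obtain ⟨w, hwz, hwx⟩ :=
    mem_closure_iff_nhds.1 hz _ (connectedComponentIn_mem_nhds (hF.mem_nhds hzF))
  rw [connectedComponentIn_eq hwx, ← connectedComponentIn_eq hwz]
  exact mem_connectedComponentIn hzF

theorem closure_connectedComponentIn_diff_inter_compl_subset {O S : Set X} (hO : IsOpen O)
    (hS : IsClosed S) {x : X} (hx : closure (connectedComponentIn (O \ S) x) ⊆ O) :
    closure (connectedComponentIn (O \ S) x) ∩ Sᶜ ⊆ connectedComponentIn (O \ S) x :=
  fun _ ⟨hz, hzS⟩ =>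
    closure_connectedComponentIn_inter_subset (hO.sdiff hS) x ⟨hz, hx hz, hzS⟩

theorem subset_connectedComponentIn_diff_of_isPreconnected {O S P : Set X} (hO : IsOpen O)
    (hS : IsClosed S) {x : X} (hx : closure (connectedComponentIn (O \ S) x) ⊆ O)
    (hP : IsPreconnected P) (hPS : P ⊆ Sᶜ) (hPx : (P ∩ connectedComponentIn (O \ S) x).Nonempty) :
    P ⊆ connectedComponentIn (O \ S) x :=
  hP.subset_of_closure_inter_subset (hO.sdiff hS).connectedComponentIn hPx fun _ hz =>
    closure_connectedComponentIn_diff_inter_compl_subset hO hS hx ⟨hz.1, hPS hz.2⟩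

theorem isClosed_infill {O S : Set X} (hO : IsOpen O) (hS : IsClosed S) :
    IsClosed (infill O S) := by
  refine closure_subset_iff_isClosed.1 fun q hq => ?_
  by_cases hqS : q ∈ S
  · exact .inl hqS
  set W := connectedComponentIn Sᶜ q
  have hWS : W ⊆ Sᶜ := connectedComponentIn_subset _ _
  obtain ⟨y, hyW, hy⟩ := mem_closure_iff.1 hq W hS.isOpen_compl.connectedComponentIn
    (mem_connectedComponentIn hqS)
  rcases mem_infill_iff.1 hy with hyS | ⟨hyO, hyC⟩
  · exact absurd hyS (hWS hyW)
  have hWy : W ⊆ connectedComponentIn (O \ S) y :=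
    subset_connectedComponentIn_diff_of_isPreconnected hO hS hyC.2
      isPreconnected_connectedComponentIn hWS
      ⟨y, hyW, mem_connectedComponentIn ⟨hyO, hWS hyW⟩⟩
  exact .inr ⟨y, ⟨hyO, hWS hyW⟩, hWy (mem_connectedComponentIn hqS), hyC⟩

end LocallyConnected

end Infill

section NormedSpace

variable {E : Type*} [NormedAddCommGroup E] [NormedSpace ℝ E]

theorem exists_isPreconnected_not_isBounded_subset_compl {S : Set E} {R : ℝ} (hR : 0 ≤ R)
    (hSR : S ⊆ closedBall 0 R) {p : E} (hp : R < ‖p‖) :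
    ∃ P : Set E, IsPreconnected P ∧ p ∈ P ∧ P ⊆ Sᶜ ∧ ¬Bornology.IsBounded P := by
  have hp0 : 0 < ‖p‖ := hR.trans_lt hp
  have hnorm : ∀ t : ℝ, 1 ≤ t → ‖t • p‖ = t * ‖p‖ := fun t ht => by
    rw [norm_smul, Real.norm_of_nonneg (zero_le_one.trans ht)]
  refine ⟨(· • p) '' Ici (1 : ℝ), isPreconnected_Ici.image _ (by fun_prop),
    ⟨1, self_mem_Ici, one_smul ℝ p⟩, ?_, fun hb => ?_⟩
  · rintro _ ⟨t, ht, rfl⟩ hS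
    have := mem_closedBall_zero_iff.1 (hSR hS)
    rw [hnorm t ht] at this
    nlinarith [mem_Ici.1 ht]
  · obtain ⟨C, hC⟩ := hb.exists_norm_le
    have ht : 1 ≤ 1 + |C| / ‖p‖ := le_add_of_nonneg_right (by positivity)
    have := hC _ ⟨_, ht, rfl⟩
    rw [hnorm _ ht, add_mul, one_mul, div_mul_cancel₀ _ hp0.ne'] at this
    linarith [le_abs_self C]

theorem infill_subset_closedBall {O S : Set E} (hO : IsOpen O) (hS : IsClosed S) {R : ℝ}
    (hR : 0 ≤ R) (hSR : S ⊆ closedBall 0 R) : infill O S ⊆ closedBall 0 R := by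
  intro y hy
  rcases mem_infill_iff.1 hy with hyS | ⟨hyO, hyC⟩
  · exact hSR hyS
  by_contra hyR
  obtain ⟨P, hP, hyP, hPS, hPb⟩ := exists_isPreconnected_not_isBounded_subset_compl hR hSR
    (not_le.1 (mt mem_closedBall_zero_iff.2 hyR))
  have hPC := subset_connectedComponentIn_diff_of_isPreconnected hO hS hyC.2 hP hPS
    ⟨y, hyP, mem_connectedComponentIn ⟨hyO, hPS hyP⟩⟩
  exact hPb ((hyC.1.isBounded.subset subset_closure).subset hPC)

theorem isCompact_infill [ProperSpace E] {O S : Set E} (hO : IsOpen O) (hS : IsCompact S) :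
    IsCompact (infill O S) := by
  obtain ⟨R, hR, hSR⟩ := hS.isBounded.subset_closedBall_lt 0 0
  exact (isCompact_closedBall 0 R).of_isClosed_subset (isClosed_infill hO hS.isClosed)
    (infill_subset_closedBall hO hS.isClosed hR.le hSR)

end NormedSpace

section OnePoint

variable {X : Type*} {O : Set X}

theorem coe_mem_inOnePoint {T : Set X} {y : O} :
    (y : OnePoint O) ∈ inOnePoint O T ↔ (y : X) ∈ T :=
  OnePoint.coe_injective.mem_set_image

theorem infty_notMem_inOnePoint (T : Set X) : (∞ : OnePoint O) ∉ inOnePoint O T :=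
  OnePoint.infty_notMem_image_coe

variable [TopologicalSpace X]

theorem isOpen_inOnePoint {T : Set X} (hT : IsOpen T) : IsOpen (inOnePoint O T) :=
  OnePoint.isOpen_image_coe.2 (hT.preimage continuous_subtype_val)

theorem isPreconnected_inOnePoint {T : Set X} (hT : IsPreconnected T) (hTO : T ⊆ O) :
    IsPreconnected (inOnePoint O T) := by
  have : IsPreconnected ((↑) ⁻¹' T : Set O) := by
    apply Topology.IsInducing.subtypeVal.isPreconnected_image.1
    rwa [Subtype.image_preimage_coe, inter_eq_right.2 hTO]
  exact this.image _ OnePoint.continuous_coe.continuousOn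

variable [T2Space X]

theorem isClosed_inOnePoint {T : Set X} (hT : IsCompact T) (hTO : T ⊆ O) :
    IsClosed (inOnePoint O T) := by
  have : IsCompact ((↑) ⁻¹' T : Set O) := by
    rw [Subtype.isCompact_iff, Subtype.image_preimage_coe, inter_eq_right.2 hTO]
    exact hT
  exact OnePoint.isClosed_image_coe.2 ⟨this.isClosed, this⟩

theorem infty_mem_closure_inOnePoint {T : Set X} (hTO : T ⊆ O) (hT : ¬IsRelCompactIn O T) :
    (∞ : OnePoint O) ∈ closure (inOnePoint O T) := by
  rw [mem_closure_iff_nhds_basis OnePoint.hasBasis_nhds_infty]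
  rintro s ⟨-, hs⟩
  by_contra! hTs
  have hTs : T ⊆ (↑) '' s := fun z hz => ⟨⟨z, hTO hz⟩, by_contra fun hzs =>
    hTs _ ⟨_, hz, rfl⟩ (.inl ⟨_, hzs, rfl⟩), rfl⟩
  have hsX : IsCompact ((↑) '' s : Set X) := hs.image continuous_subtype_val
  have hcl := hsX.isClosed.closure_subset_iff.2 hTs
  exact hT ⟨hsX.of_isClosed_subset isClosed_closure hcl, hcl.trans (Subtype.coe_image_subset _ _)⟩

theorem coe_mem_connectedComponentIn_infty {S : Set X} {y : O} (hyS : (y : X) ∉ S)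
    (hy : ¬IsRelCompactIn O (connectedComponentIn (O \ S) y)) :
    (y : OnePoint O) ∈ connectedComponentIn (inOnePoint O S)ᶜ (∞ : OnePoint O) := by
  set C := connectedComponentIn (O \ S) y
  have hCO : C ⊆ O := (connectedComponentIn_subset _ _).trans sdiff_subset
  have hP : IsPreconnected (insert (∞ : OnePoint O) (inOnePoint O C)) :=
    (isPreconnected_inOnePoint isPreconnected_connectedComponentIn hCO).subset_closure (subset_insert _ _)
      (insert_subset (infty_mem_closure_inOnePoint hCO hy) subset_closure)
  refine hP.subset_connectedComponentIn (mem_insert _ _) ?_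
    (mem_insert_of_mem _ (coe_mem_inOnePoint.2 (mem_connectedComponentIn ⟨y.2, hyS⟩)))
  rintro _ (rfl | ⟨w, hw, rfl⟩)
  · exact infty_notMem_inOnePoint S
  · exact fun hwS => (connectedComponentIn_subset _ _ hw).2 (coe_mem_inOnePoint.1 hwS)

variable [LocallyConnectedSpace X]

theorem coe_notMem_connectedComponentIn_infty (hO : IsOpen O) {S : Set X} (hS : IsClosed S)
    {y : O} (hyS : (y : X) ∉ S) (hy : IsRelCompactIn O (connectedComponentIn (O \ S) y)) :
    (y : OnePoint O) ∉ connectedComponentIn (inOnePoint O S)ᶜ (∞ : OnePoint O) := by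
  set C := connectedComponentIn (O \ S) y
  have hCU : closure (inOnePoint O C) ∩ (inOnePoint O S)ᶜ ⊆ inOnePoint O C := by
    rintro p ⟨hpC, hpS⟩
    obtain ⟨w, hw, rfl⟩ := closure_minimal (image_mono (preimage_mono subset_closure))
      (isClosed_inOnePoint hy.1 hy.2) hpC
    exact coe_mem_inOnePoint.2 (closure_connectedComponentIn_diff_inter_compl_subset hO hS hy.2
      ⟨hw, fun hwS => hpS (coe_mem_inOnePoint.2 hwS)⟩)
  intro hyK
  have hKC := isPreconnected_connectedComponentIn.subset_of_closure_inter_subset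
    (isOpen_inOnePoint (hO.sdiff hS).connectedComponentIn)
    ⟨_, hyK, coe_mem_inOnePoint.2 (mem_connectedComponentIn ⟨y.2, hyS⟩)⟩
    fun _ hz => hCU ⟨hz.1, connectedComponentIn_subset _ _ hz.2⟩
  exact infty_notMem_inOnePoint _ (hKC (mem_connectedComponentIn (infty_notMem_inOnePoint S)))

theorem inOnePoint_infill_eq (hO : IsOpen O) {S : Set X} (hS : IsClosed S) :
    inOnePoint O (infill O S) = (connectedComponentIn (inOnePoint O S)ᶜ (∞ : OnePoint O))ᶜ := by
  ext p
  induction p with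
  | infty =>
    exact iff_of_false (infty_notMem_inOnePoint _)
      (not_not.2 (mem_connectedComponentIn (infty_notMem_inOnePoint S)))
  | coe y =>
    rw [coe_mem_inOnePoint, mem_infill_iff, mem_compl_iff]
    by_cases hyS : (y : X) ∈ S
    · exact iff_of_true (.inl hyS)
        fun hyK => connectedComponentIn_subset _ _ hyK (coe_mem_inOnePoint.2 hyS)
    · simp only [hyS, y.2, false_or, true_and]
      exact ⟨coe_notMem_connectedComponentIn_infty hO hS hyS,
        Not.imp_symm (coe_mem_connectedComponentIn_infty hyS)⟩

theorem isConnected_compl_inOnePoint_infill (hO : IsOpen O) {S : Set X} (hS : IsClosed S) :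
    IsConnected (inOnePoint O (infill O S))ᶜ := by
  rw [inOnePoint_infill_eq hO hS, compl_compl]
  exact isConnected_connectedComponentIn_iff.2 (infty_notMem_inOnePoint S)

end OnePoint

theorem OnePoint.exists_mem_nhds_isPreconnected_subset_coe {Y : Type*} [TopologicalSpace Y]
    [LocallyConnectedSpace Y] (y : Y) {t : Set (OnePoint Y)} (ht : t ∈ 𝓝 (y : OnePoint Y)) :
    ∃ V ∈ 𝓝 (y : OnePoint Y), IsPreconnected V ∧ V ⊆ t := by
  refine ⟨(↑) '' connectedComponentIn ((↑) ⁻¹' t) y, ?_,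
    isPreconnected_connectedComponentIn.image _ OnePoint.continuous_coe.continuousOn,
    image_subset_iff.2 (connectedComponentIn_subset _ _)⟩
  rw [OnePoint.nhds_coe_eq]
  exact image_mem_map (connectedComponentIn_mem_nhds
    (OnePoint.continuous_coe.continuousAt.preimage_mem_nhds ht))

section NormedSpace

variable {E : Type*} [NormedAddCommGroup E] [NormedSpace ℝ E] [ProperSpace E] {O : Set E}

theorem exists_mem_nhds_isPreconnected_subset_infty (hO : IsOpen O) {t : Set (OnePoint O)}
    (ht : t ∈ 𝓝 (∞ : OnePoint O)) : ∃ V ∈ 𝓝 (∞ : OnePoint O), IsPreconnected V ∧ V ⊆ t := by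
  obtain ⟨s, ⟨-, hs⟩, hst⟩ := OnePoint.hasBasis_nhds_infty.mem_iff.1 ht
  have hL : IsCompact ((↑) '' s : Set E) := hs.image continuous_subtype_val
  refine ⟨(inOnePoint O (infill O ((↑) '' s)))ᶜ,
    (isClosed_inOnePoint (isCompact_infill hO hL) (infill_subset (Subtype.coe_image_subset _ _))
      ).isOpen_compl.mem_nhds (infty_notMem_inOnePoint _),
    (isConnected_compl_inOnePoint_infill hO hL.isClosed).isPreconnected, fun p hp => hst ?_⟩
  induction p with
  | infty => exact .inr rfl
  | coe w => exact .inl ⟨w, fun hw => hp (coe_mem_inOnePoint.2 (.inl ⟨w, hw, rfl⟩)), rfl⟩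

theorem locallyConnectedSpace_onePoint (hO : IsOpen O) : LocallyConnectedSpace (OnePoint O) := by
  have := hO.locallyConnectedSpace
  refine locallyConnectedSpace_iff_connected_subsets.2 fun p t ht => ?_
  induction p with
  | infty => exact exists_mem_nhds_isPreconnected_subset_infty hO ht
  | coe y => exact OnePoint.exists_mem_nhds_isPreconnected_subset_coe y ht

end NormedSpace

theorem stmt_1_general {d : ℕ} (O : Set (Euc d)) (hO : IsOpen O)
    (S : Set (Euc d)) (hSO : S ⊆ O) (hS : IsCompact S) :
    inOnePoint O (infill O S) =
      (connectedComponentIn ((inOnePoint O S)ᶜ) (OnePoint.infty : OnePoint ↥O))ᶜ ∧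
    IsConnected ((inOnePoint O (infill O S))ᶜ) ∧
    LocallyConnectedSpace ((inOnePoint O (infill O S))ᶜ : Set (OnePoint ↥O)) := by
  have := locallyConnectedSpace_onePoint hO
  have hK := (isClosed_inOnePoint (isCompact_infill hO hS) (infill_subset hSO)).isOpen_compl
  exact ⟨inOnePoint_infill_eq hO hS.isClosed, isConnected_compl_inOnePoint_infill hO hS.isClosed,
    hK.locallyConnectedSpace⟩

/-- For a compact subset `S` of an open set `O ⊆ ℝ^d`, the inward filling
`infill O S`, viewed inside the one-point compactification `O_∞` of `O`, coincides with the
complement of the connected component of `O_∞ \ S` containing the point `∞`; moreover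
`O_∞ \ infill O S` is connected and locally connected. -/
theorem stmt_1 {d : ℕ} (O : Set (Euc d)) (hO : IsOpen O) (hOne : O.Nonempty)
    (S : Set (Euc d)) (hSO : S ⊆ O) (hS : IsCompact S) :
    inOnePoint O (infill O S) =
      (connectedComponentIn ((inOnePoint O S)ᶜ) (OnePoint.infty : OnePoint ↥O))ᶜ ∧
    IsConnected ((inOnePoint O (infill O S))ᶜ) ∧
    LocallyConnectedSpace ((inOnePoint O (infill O S))ᶜ : Set (OnePoint ↥O)) :=
  stmt_1_general O hO S hSO hS
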